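/- For every h ∈ ℂ with Re(h) > 1, one has β_{0,q}^h = (h−1)/[h−1]_q, and for every n ∈ ℕ with n ≥ 1, q^{h−1} · β_{n,q}^h(1) − β_{n,q}^h = δ_{1,n}, where δ_{1,n} is the Kronecker delta (equal to 1 if n = 1 and 0 otherwise). -/

import Mathlib

open Complex Finset Filter

/-- Complex power `q^z := exp(z·log q)` for a real base `q`. -/
noncomputable def qcpow (q : ℝ) (z : ℂ) : ℂ := Complex.exp (z * (Real.log q : ℂ))

/-- The complex `q`-number `[z]_q = (1 - q^z)/(1 - q)`. -/
noncomputable def qnum (q : ℝ) (z : ℂ) : ℂ := (1 - qcpow q z) / (1 - (q : ℂ))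

/-- The real `q`-number `[y]_q = (1 - q^y)/(1 - q)` for real `y`. -/
noncomputable def qnumR (q : ℝ) (y : ℝ) : ℝ := (1 - Real.exp (y * Real.log q)) / (1 - q)

/-- The `(h,q)`-Bernoulli polynomial
`β_{n,q}^h(x) = (1-q)^{-n} ∑_{l=0}^{n} C(n,l) (-1)^l q^{lx} (l+h-1)/[l+h-1]_q`. -/
noncomputable def qbeta (q : ℝ) (h : ℂ) (n : ℕ) (x : ℝ) : ℂ :=
  (1 - (q : ℂ))⁻¹ ^ n * ∑ l ∈ Finset.range (n + 1),
    (n.choose l : ℂ) * (-1) ^ l * qcpow q ((l : ℂ) * (x : ℂ)) *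
      (((l : ℂ) + h - 1) / qnum q ((l : ℂ) + h - 1))

/-! Since `q^{h-1} q^{l} = q^{l+h-1}`, the `l`-th term of `q^{h-1} β_n(1) - β_n(0)` is
`C(n,l) (-1)^l (q^{l+h-1} - 1) (l+h-1)/[l+h-1]_q = -(1-q) C(n,l) (-1)^l (l+h-1)`. The alternating
binomial sum of the linear function `l ↦ l + h - 1` vanishes for `n ≥ 2` and equals `-1` for
`n = 1`. -/

section AlternatingSums

variable {R : Type*} [CommRing R]

theorem sum_range_choose_mul_neg_one_pow (n : ℕ) :
    ∑ l ∈ range (n + 1), (n.choose l : R) * (-1) ^ l = if n = 0 then 1 else 0 := by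
  have h := congrArg (Int.cast : ℤ → R) (Int.alternating_sum_range_choose (n := n))
  push_cast [mul_comm] at h
  simpa [apply_ite (Int.cast : ℤ → R)] using h

theorem sum_range_choose_mul_neg_one_pow_mul_self (n : ℕ) :
    ∑ l ∈ range (n + 1), (n.choose l : R) * (-1) ^ l * l = if n = 1 then -1 else 0 := by
  cases n with
  | zero => simp
  | succ m =>
    have hterm : ∀ j ∈ range (m + 1),
        ((m + 1).choose (j + 1) : R) * (-1) ^ (j + 1) * ((j + 1 : ℕ) : R)
          = -((m + 1 : R) * ((m.choose j : R) * (-1) ^ j)) := by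
      intro j _
      have hc := congrArg (Nat.cast : ℕ → R) (Nat.add_one_mul_choose_eq m j)
      push_cast at hc ⊢
      linear_combination (-1 : R) ^ j * hc
    rw [sum_range_succ', sum_congr rfl hterm, sum_neg_distrib, ← mul_sum,
      sum_range_choose_mul_neg_one_pow]
    rcases eq_or_ne m 0 with rfl | hm
    · simp
    · simp [hm]

theorem sum_range_choose_mul_neg_one_pow_mul_add {n : ℕ} (hn : n ≠ 0) (c : R) :
    ∑ l ∈ range (n + 1), (n.choose l : R) * (-1) ^ l * (l + c) = if n = 1 then -1 else 0 := by
  simp only [mul_add, sum_add_distrib, ← sum_mul, sum_range_choose_mul_neg_one_pow_mul_self,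
    sum_range_choose_mul_neg_one_pow, if_neg hn, zero_mul, add_zero]

end AlternatingSums

theorem qcpow_add (q : ℝ) (a b : ℂ) : qcpow q (a + b) = qcpow q a * qcpow q b := by
  rw [qcpow, qcpow, qcpow, ← Complex.exp_add, add_mul]

theorem norm_qcpow {q : ℝ} (hq : 0 < q) (z : ℂ) : ‖qcpow q z‖ = q ^ z.re := by
  rw [qcpow, Complex.norm_exp, Real.rpow_def_of_pos hq]
  simp [mul_comm]

theorem qcpow_ne_one {q : ℝ} (hq0 : 0 < q) (hq1 : q < 1) {z : ℂ} (hz : 0 < z.re) :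
    qcpow q z ≠ 1 := by
  intro h
  have hlt : ‖qcpow q z‖ < 1 := by
    rw [norm_qcpow hq0]
    exact Real.rpow_lt_one hq0.le hq1 hz
  simp [h] at hlt

theorem qnum_ne_zero {q : ℝ} (hq0 : 0 < q) (hq1 : q < 1) {z : ℂ} (hz : 0 < z.re) :
    qnum q z ≠ 0 := by
  have hq : (1 : ℂ) - q ≠ 0 := sub_ne_zero.2 (by exact_mod_cast hq1.ne')
  exact div_ne_zero (sub_ne_zero.2 (qcpow_ne_one hq0 hq1 hz).symm) hq

theorem qcpow_sub_one_mul_div_qnum {q : ℝ} {z : ℂ} (hz : qnum q z ≠ 0) :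
    (qcpow q z - 1) * (z / qnum q z) = -((1 - q) * z) := by
  obtain ⟨hnum, hden⟩ := div_ne_zero_iff.1 hz
  rw [qnum]
  field_simp
  ring

theorem qcpow_mul_qbeta_one_sub_qbeta_zero {q : ℝ} {h : ℂ}
    (hnum : ∀ l : ℕ, qnum q (l + h - 1) ≠ 0) (n : ℕ) :
    qcpow q (h - 1) * qbeta q h n 1 - qbeta q h n 0 =
      -((1 - (q : ℂ))⁻¹ ^ n * (1 - q)) *
        ∑ l ∈ range (n + 1), (n.choose l : ℂ) * (-1) ^ l * (l + (h - 1)) := by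
  simp only [qbeta, mul_sum, ← sum_sub_distrib]
  refine sum_congr rfl fun l _ => ?_
  have hone : qcpow q (h - 1) * qcpow q (l * (1 : ℝ)) = qcpow q (l + h - 1) := by
    rw [← qcpow_add]; push_cast; ring_nf
  have hzero : qcpow q (l * (0 : ℝ)) = 1 := by simp [qcpow]
  have hterm := qcpow_sub_one_mul_div_qnum (hnum l)
  set c : ℂ := (1 - (q : ℂ))⁻¹ ^ n * n.choose l * (-1) ^ l
  set x : ℂ := (l + h - 1) / qnum q (l + h - 1)
  linear_combination c * hterm + c * x * hone - c * x * hzero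

/-- `β_{0,q}^h = (h-1)/[h-1]_q` and
`q^{h-1} β_{n,q}^h(1) - β_{n,q}^h = δ_{1,n}` for `n ≥ 1`. -/
theorem qbeta_zero_and_kronecker (q : ℝ) (hq0 : 0 < q) (hq1 : q < 1)
    (h : ℂ) (hh : 1 < h.re) :
    qbeta q h 0 0 = (h - 1) / qnum q (h - 1) ∧
    ∀ n : ℕ, 1 ≤ n →
      qcpow q (h - 1) * qbeta q h n 1 - qbeta q h n 0 = if n = 1 then 1 else 0 := by
  refine ⟨by simp [qbeta, qcpow], fun n hn => ?_⟩
  have hnum : ∀ l : ℕ, qnum q (l + h - 1) ≠ 0 := fun l =>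
    qnum_ne_zero hq0 hq1 (by
      simp only [sub_re, add_re, natCast_re, one_re]
      linarith [(Nat.cast_nonneg l : (0 : ℝ) ≤ l)])
  have hq : (1 : ℂ) - q ≠ 0 := sub_ne_zero.2 (by exact_mod_cast hq1.ne')
  rw [qcpow_mul_qbeta_one_sub_qbeta_zero hnum,
    sum_range_choose_mul_neg_one_pow_mul_add (Nat.one_le_iff_ne_zero.1 hn)]
  split_ifs with hn1
  · subst hn1
    field_simp
  · simp
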